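/- Let T ⊆ ℝⁿ be a closed regular set, I ⊆ ℤ₊ⁿ a finite regular set of multi-indices, and g = (g_i)_{i∈I} with g_0 = 1. If the Riesz functional φ_g : P_I → ℝ satisfies φ_g(p) > 0 for every nonzero p ∈ P_I with p(t) ≥ 0 for all t ∈ T, then there exists f ∈ L¹(T, dt) with f ≥ 0 a.e., ∫_T |t^i| f(t) dt < ∞ for all i ∈ I, and ∫_T t^i f(t) dt = g_i for all i ∈ I. -/

import Mathlib

/-!
The moment vectors `(∫_T t^i f(t) dt)_{i ∈ I}` of nonnegative densities `f` form a convex cone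
`C ⊆ ℝ^I`. If `g ∉ C`, a supporting hyperplane gives a nonzero functional `ℓ = Σ c_i v_i` with
`ℓ ≥ 0` on `C` and `ℓ g ≤ 0` (`C` need not be closed, so only weak separation is available).
Testing `ℓ` against indicators of small neighbourhoods of points of `T`, which have positive
measure because `T` is regular, shows that `p = Σ c_i X^i` is nonnegative on `T`. As `p ≠ 0`,
strict positivity of `φ_g` gives `0 < φ_g p = ℓ g`, a contradiction.
-/

open MeasureTheory

/-- `P_I`: the linear span of the monomials `X^i`, `i ∈ I`, in `ℝ[X₁,…,Xₙ]`. -/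
noncomputable def PIdx (n : ℕ) (I : Finset (Fin n →₀ ℕ)) :
    Submodule ℝ (MvPolynomial (Fin n) ℝ) :=
  Submodule.span ℝ {q | ∃ i ∈ I, q = MvPolynomial.monomial i 1}

/-- The Riesz functional `φ_g` associated to `g = (g_i)_{i ∈ I}`: on `P_I` it sends
`Σ_{i ∈ I} c_i X^i` to `Σ_{i ∈ I} g_i c_i`. -/
noncomputable def riesz (n : ℕ) (I : Finset (Fin n →₀ ℕ)) (g : I → ℝ)
    (p : MvPolynomial (Fin n) ℝ) : ℝ :=
  ∑ i : I, g i * MvPolynomial.coeff i.1 p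

/-- The monomial function `t ^ i = t₁^{i₁} ⋯ tₙ^{iₙ}` on `ℝⁿ`. -/
noncomputable def monoF (n : ℕ) (i : Fin n →₀ ℕ) (t : EuclideanSpace ℝ (Fin n)) : ℝ :=
  ∏ k, t k ^ i k

/-- A set `T ⊆ ℝⁿ` is regular if it is nonempty and for every `t ∈ T` and `ε > 0` the
Lebesgue measure of `{x ∈ T : ‖x - t‖ < ε}` is positive. -/
def RegularSet (n : ℕ) (T : Set (EuclideanSpace ℝ (Fin n))) : Prop :=
  T.Nonempty ∧ ∀ t ∈ T, ∀ ε > (0 : ℝ), 0 < volume {x ∈ T | ‖x - t‖ < ε}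

/-- A finite set `I` of multi-indices is regular if it is nonempty and for every `i ∈ I` the
set `σ_i = {j : j k = 0 or j k = i k for each k}` is contained in `I`. -/
def RegularIdx (n : ℕ) (I : Finset (Fin n →₀ ℕ)) : Prop :=
  I.Nonempty ∧ ∀ i ∈ I, ∀ j : Fin n →₀ ℕ, (∀ k, j k = 0 ∨ j k = i k) → j ∈ I

open Filter Topology

section MomentCone

variable {X ι : Type*} [MeasurableSpace X]

def momentCone (μ : Measure X) (φ : ι → X → ℝ) : PointedCone ℝ (ι → ℝ) where
  carrier := {v | ∃ f : X → ℝ, Integrable f μ ∧ 0 ≤ᵐ[μ] f ∧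
    (∀ i, Integrable (fun x => φ i x * f x) μ) ∧ ∀ i, ∫ x, φ i x * f x ∂μ = v i}
  zero_mem' := ⟨0, integrable_zero _ _ _, EventuallyLE.rfl, fun _ => by simp, fun _ => by simp⟩
  add_mem' := by
    rintro v w ⟨f, hf, hf0, hφf, hv⟩ ⟨h, hh, hh0, hφh, hw⟩
    refine ⟨f + h, hf.add hh, ?_, fun i => ?_, fun i => ?_⟩
    · filter_upwards [hf0, hh0] with x hfx hhx using add_nonneg hfx hhx
    · simp only [Pi.add_apply, mul_add]
      exact (hφf i).add (hφh i)
    · simp only [Pi.add_apply, mul_add]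
      rw [integral_add (hφf i) (hφh i), hv, hw]
  smul_mem' := by
    rintro c v ⟨f, hf, hf0, hφf, hv⟩
    refine ⟨fun x => c * f x, hf.const_mul c, ?_, fun i => ?_, fun i => ?_⟩
    · filter_upwards [hf0] with x hx using mul_nonneg c.2 hx
    · simpa only [mul_left_comm] using (hφf i).const_mul c
    · change _ = (c : ℝ) * v i
      simp only [mul_left_comm, integral_const_mul, hv]

variable {μ : Measure X} {φ : ι → X → ℝ}

theorem mem_momentCone {v : ι → ℝ} : v ∈ momentCone μ φ ↔ ∃ f : X → ℝ, Integrable f μ ∧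
    0 ≤ᵐ[μ] f ∧ (∀ i, Integrable (fun x => φ i x * f x) μ) ∧ ∀ i, ∫ x, φ i x * f x ∂μ = v i :=
  Iff.rfl

theorem setIntegral_mem_momentCone {U : Set X} (hU : MeasurableSet U) (hμU : μ U ≠ ⊤)
    (hφ : ∀ i, IntegrableOn (φ i) U μ) : (fun i => ∫ x in U, φ i x ∂μ) ∈ momentCone μ φ := by
  have hind : ∀ i, (fun x => φ i x * U.indicator 1 x) = U.indicator (φ i) := fun i =>
    funext fun x => by by_cases hx : x ∈ U <;> simp [hx]
  refine mem_momentCone.2 ⟨U.indicator 1, (integrable_indicator_iff hU).2 (integrableOn_const hμU),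
    Eventually.of_forall (Set.indicator_nonneg fun _ _ => zero_le_one), fun i => ?_, fun i => ?_⟩
  · rw [hind]
    exact (integrable_indicator_iff hU).2 (hφ i)
  · rw [hind, integral_indicator hU]

end MomentCone

theorem ContinuousAt.nonneg_of_forall_setIntegral_nonneg {X : Type*} [TopologicalSpace X]
    [MeasurableSpace X] [OpensMeasurableSpace X] {μ : Measure X} {q : X → ℝ} {x : X}
    {V : Set X} (hq : ContinuousAt q x) (hx : x ∈ μ.support) (hV : V ∈ 𝓝 x)
    (hqV : IntegrableOn q V μ) (h : ∀ U ⊆ V, IsOpen U → 0 ≤ ∫ y in U, q y ∂μ) : 0 ≤ q x := by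
  by_contra! hneg
  obtain ⟨U, hUsub, hUopen, hxU⟩ :=
    mem_nhds_iff.1 (inter_mem hV (hq.eventually (gt_mem_nhds hneg)))
  have hμU : 0 < μ U := (Measure.mem_support_iff_forall x).1 hx U (hUopen.mem_nhds hxU)
  have hint : 0 < ∫ y in U, -q y ∂μ := by
    rw [setIntegral_pos_iff_support_of_nonneg_ae
      (ae_restrict_of_forall_mem hUopen.measurableSet fun y hy => neg_nonneg.2 (hUsub hy).2.le)
      (hqV.mono_set fun y hy => (hUsub hy).1).neg]
    exact hμU.trans_le (measure_mono fun y hy => ⟨neg_ne_zero.2 (hUsub hy).2.ne, hy⟩)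
  rw [integral_neg] at hint
  linarith [h U (fun y hy => (hUsub hy).1) hUopen]

theorem nonneg_apply_of_nonneg_on_momentCone {X ι : Type*} [TopologicalSpace X] [T2Space X]
    [LocallyCompactSpace X] [MeasurableSpace X] [OpensMeasurableSpace X] [Fintype ι]
    {μ : Measure X} [IsFiniteMeasureOnCompacts μ] {φ : ι → X → ℝ} (hφ : ∀ i, Continuous (φ i))
    {ℓ : (ι → ℝ) →ₗ[ℝ] ℝ} (hℓ : ∀ v ∈ momentCone μ φ, 0 ≤ ℓ v) {x : X} (hx : x ∈ μ.support) :
    0 ≤ ℓ (fun i => φ i x) := by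
  obtain ⟨K, hK, hKx⟩ := exists_compact_mem_nhds x
  have hq : Continuous fun y => ℓ (fun i => φ i y) :=
    ℓ.continuous_of_finiteDimensional.comp (continuous_pi hφ)
  refine hq.continuousAt.nonneg_of_forall_setIntegral_nonneg hx hKx
    (hq.continuousOn.integrableOn_compact hK) fun U hUK hU => ?_
  have hφU : ∀ i, IntegrableOn (φ i) U μ := fun i =>
    ((hφ i).continuousOn.integrableOn_compact hK).mono_set hUK
  have hmoment : ∫ y in U, ℓ (fun i => φ i y) ∂μ = ℓ (fun i => ∫ y in U, φ i y ∂μ) := by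
    rw [← funext (eval_integral hφU)]
    exact ℓ.toContinuousLinearMap.integral_comp_comm (Integrable.of_eval hφU)
  rw [hmoment]
  exact hℓ _ (setIntegral_mem_momentCone hU.measurableSet
    ((measure_mono hUK).trans_lt hK.measure_lt_top).ne hφU)

theorem PointedCone.exists_dual_nonneg_of_notMem {E : Type*} [NormedAddCommGroup E]
    [NormedSpace ℝ E] [FiniteDimensional ℝ E] (C : PointedCone ℝ E) {x : E} (hx : x ∉ C) :
    ∃ ℓ : E →ₗ[ℝ] ℝ, ℓ ≠ 0 ∧ (∀ y ∈ C, 0 ≤ ℓ y) ∧ ℓ x ≤ 0 := by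
  by_cases hspan : Submodule.span ℝ (C : Set E) = ⊤
  · have hvec : vectorSpan ℝ (C : Set E) = ⊤ := by
      rw [vectorSpan_eq_span_vsub_set_right ℝ C.zero_mem]
      simpa [vsub_eq_sub] using hspan
    have hint : (interior (C : Set E)).Nonempty :=
      C.convex.interior_nonempty_iff_affineSpan_eq_top.2
        ((AffineSubspace.affineSpan_eq_top_iff_vectorSpan_eq_top_of_nonempty ℝ _ _
          ⟨0, C.zero_mem⟩).2 hvec)
    obtain ⟨f, hf0, hf⟩ := geometric_hahn_banach_of_nonempty_interior_point C.convex
      (fun h => hx (interior_subset h)) hint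
    have hfx : 0 ≤ f x := by simpa using hf 0 C.zero_mem
    have hfC : ∀ y ∈ C, f y ≤ 0 := fun y hy => by
      by_contra! hpos
      have := hf _ (C.smul_mem (div_nonneg (by linarith) hpos.le : 0 ≤ (f x + 1) / f y) hy)
      rw [map_smul, smul_eq_mul, div_mul_cancel₀ _ hpos.ne'] at this
      linarith
    refine ⟨-f.toLinearMap, fun h => hf0 ?_, fun y hy => by simpa using hfC y hy, ?_⟩
    · ext y
      simpa using congrArg (· y) h
    · simpa using hfx
  · obtain ⟨f, hf0, hfC⟩ := Submodule.exists_dual_map_eq_bot_of_lt_top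
      (lt_top_iff_ne_top.2 hspan) inferInstance
    have hfC : ∀ y ∈ C, f y = 0 := fun y hy => by
      simpa [hfC] using Submodule.mem_map_of_mem (f := f) (Submodule.subset_span (R := ℝ) hy)
    rcases le_total (f x) 0 with hfx | hfx
    · exact ⟨f, hf0, fun y hy => (hfC y hy).ge, hfx⟩
    · exact ⟨-f, neg_ne_zero.2 hf0, fun y hy => by simp [hfC y hy], by simpa using hfx⟩

theorem RegularSet.subset_support_restrict {n : ℕ} {T : Set (EuclideanSpace ℝ (Fin n))}
    (hT : RegularSet n T) : T ⊆ (volume.restrict T).support := fun t ht =>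
  Metric.nhds_basis_ball.mem_measureSupport.2 fun ε hε => by
    rw [Measure.restrict_apply measurableSet_ball]
    convert hT.2 t ht ε hε using 2
    ext x
    simp [dist_eq_norm, and_comm]

theorem continuous_monoF (n : ℕ) (i : Fin n →₀ ℕ) : Continuous (monoF n i) :=
  continuous_finsetProd _ fun k _ => (EuclideanSpace.proj k).continuous.pow _

section PolyOfCoeffs

open MvPolynomial

variable {n : ℕ} (I : Finset (Fin n →₀ ℕ))

noncomputable def polyOfCoeffs (c : I → ℝ) : MvPolynomial (Fin n) ℝ :=
  ∑ i : I, monomial (i : Fin n →₀ ℕ) (c i)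

variable {I}

theorem coeff_polyOfCoeffs (c : I → ℝ) (j : I) :
    coeff (j : Fin n →₀ ℕ) (polyOfCoeffs I c) = c j := by
  classical
  simp [polyOfCoeffs, coeff_sum, coeff_monomial]

theorem polyOfCoeffs_mem_PIdx (c : I → ℝ) : polyOfCoeffs I c ∈ PIdx n I :=
  Submodule.sum_mem _ fun i _ => by
    rw [← mul_one (c i), ← smul_eq_mul, ← smul_monomial]
    exact Submodule.smul_mem _ _ (Submodule.subset_span ⟨i, i.2, rfl⟩)

theorem polyOfCoeffs_ne_zero {c : I → ℝ} (hc : c ≠ 0) : polyOfCoeffs I c ≠ 0 := fun h =>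
  hc (funext fun j => by simpa [h] using (coeff_polyOfCoeffs c j).symm)

theorem eval_polyOfCoeffs (c : I → ℝ) (t : EuclideanSpace ℝ (Fin n)) :
    eval (fun k => t k) (polyOfCoeffs I c) = ∑ i, c i * monoF n i t := by
  simp [polyOfCoeffs, eval_monomial, Finsupp.prod_pow, monoF]

theorem riesz_polyOfCoeffs (g c : I → ℝ) : riesz n I g (polyOfCoeffs I c) = ∑ i, g i * c i := by
  simp only [riesz, coeff_polyOfCoeffs]

end PolyOfCoeffs

theorem stmt_12_general (n : ℕ) (T : Set (EuclideanSpace ℝ (Fin n)))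
    (hTreg : RegularSet n T)
    (I : Finset (Fin n →₀ ℕ)) (g : I → ℝ)
    (hpos : ∀ p ∈ PIdx n I, p ≠ 0 →
      (∀ t ∈ T, 0 ≤ MvPolynomial.eval (fun k => t k) p) → 0 < riesz n I g p) :
    ∃ f : EuclideanSpace ℝ (Fin n) → ℝ,
      Integrable f (volume.restrict T) ∧
      (0 ≤ᵐ[volume.restrict T] f) ∧
      (∀ i : I, Integrable (fun t => monoF n i t * f t) (volume.restrict T)) ∧
      (∀ i : I, ∫ t in T, monoF n i t * f t = g i) := by
  suffices hg : g ∈ momentCone (volume.restrict T) fun i : I => monoF n i from hg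
  by_contra hg
  obtain ⟨ℓ, hℓ0, hℓC, hℓg⟩ :=
    (momentCone (volume.restrict T) fun i : I => monoF n i).exists_dual_nonneg_of_notMem hg
  set c := LinearEquiv.piRing ℝ ℝ I ℝ ℓ
  have hℓ : ∀ v, ℓ v = ∑ i, v i * c i := fun v => by
    conv_lhs => rw [← (LinearEquiv.piRing ℝ ℝ I ℝ).symm_apply_apply ℓ]
    rw [LinearEquiv.piRing_symm_apply]
    rfl
  have hpT : ∀ t ∈ T, 0 ≤ MvPolynomial.eval (fun k => t k) (polyOfCoeffs I c) := fun t ht => by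
    simpa [eval_polyOfCoeffs, hℓ, mul_comm] using nonneg_apply_of_nonneg_on_momentCone
      (fun i : I => continuous_monoF n i) hℓC (hTreg.subset_support_restrict ht)
  have hc : c ≠ 0 := by simpa [c] using hℓ0
  have hφg := hpos _ (polyOfCoeffs_mem_PIdx c) (polyOfCoeffs_ne_zero hc) hpT
  rw [riesz_polyOfCoeffs, ← hℓ] at hφg
  linarith

/-- Let `T ⊆ ℝⁿ` be a closed regular set, `I` a finite regular set of
multi-indices, and `g = (g_i)_{i∈I}` with `g_0 = 1`. If the Riesz functional satisfies
`φ_g p > 0` for every nonzero `p ∈ P_I` with `p ≥ 0` on `T`, then there exists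
`f ∈ L¹(T, dt)`, `f ≥ 0` a.e., with `∫_T |t^i| f dt < ∞` and `∫_T t^i f dt = g_i` for all
`i ∈ I`. -/
theorem stmt_12 (n : ℕ) (T : Set (EuclideanSpace ℝ (Fin n))) (hT : IsClosed T)
    (hTreg : RegularSet n T)
    (I : Finset (Fin n →₀ ℕ)) (hIreg : RegularIdx n I)
    (h0I : (0 : Fin n →₀ ℕ) ∈ I) (g : I → ℝ) (hg0 : g ⟨0, h0I⟩ = 1)
    (hpos : ∀ p ∈ PIdx n I, p ≠ 0 →
      (∀ t ∈ T, 0 ≤ MvPolynomial.eval (fun k => t k) p) → 0 < riesz n I g p) :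
    ∃ f : EuclideanSpace ℝ (Fin n) → ℝ,
      Integrable f (volume.restrict T) ∧
      (0 ≤ᵐ[volume.restrict T] f) ∧
      (∀ i : I, Integrable (fun t => monoF n i t * f t) (volume.restrict T)) ∧
      (∀ i : I, ∫ t in T, monoF n i t * f t = g i) :=
  stmt_12_general n T hTreg I g hpos
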